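/- Fix t ∈ [0,1] and γ ∈ [0,1). Let m̄ : S×A → P(S) be a fixed point of B_t^π with finite first moments, and let m^{(0)} : S×A → P(S) have finite first moments with C := sup_{s,a} W₁(m^{(0)}(·|s,a), m̄(·|s,a)) < ∞; define iterates m^{(n+1)} := B_t^π m^{(n)}. Assume that for every n and every ε > 0 there exists a jointly measurable family of couplings of m^{(n)}(·|s,a) and m̄(·|s,a) whose expected transport cost is within ε of W₁(m^{(n)}(·|s,a), m̄(·|s,a)) for all (s,a). Then for every n ≥ 0, sup_{s,a} W₁(m^{(n)}(·|s,a), m̄(·|s,a)) ≤ γⁿ · C; in particular the iterates of the probability-path Bellman operator converge to the fixed point in the supremum 1-Wasserstein distance. -/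

import Mathlib

/-!
Couple `B_t^π m (·|s,a)` with `B_t^π m̄ (·|s,a) = m̄ (·|s,a)` synchronously: the two
`(1 - γ) P_t` parts along the diagonal, at zero cost, and the two `γ P^π` parts by drawing the
next state `s' ~ P(·|s,a)` once and then a near-optimal coupling of `m(·|s',π s')` and
`m̄(·|s',π s')`, which is why that family has to be measurable. The cost is at most `γ` times the
supremum distance, so `B_t^π` contracts towards its fixed point and induction gives `γⁿ C`.
-/

open MeasureTheory
open scoped ENNReal NNReal

noncomputable section

/-- The state space `S = ℝ^d`. -/
abbrev St (d : ℕ) := EuclideanSpace ℝ (Fin d)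

/-- `(P^π m)(·|s,a) := ∫ m(·|s',π(s')) P(ds'|s,a)`. -/
def Ppi {d : ℕ} {𝒜 : Type*} [MeasurableSpace 𝒜]
    (P : St d × 𝒜 → Measure (St d)) (π : St d → 𝒜)
    (m : St d × 𝒜 → Measure (St d)) : St d × 𝒜 → Measure (St d) :=
  fun sa => (P sa).bind fun s' => m (s', π s')

/-- `P_t(·|s,a) := ∫ p_{t|1}(·|x₁) P(dx₁|s,a)` for a conditional path kernel `p_{t|1}`. -/
def Pt {d : ℕ} {𝒜 : Type*} [MeasurableSpace 𝒜]
    (P : St d × 𝒜 → Measure (St d)) (κ : St d → Measure (St d)) :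
    St d × 𝒜 → Measure (St d) :=
  fun sa => (P sa).bind κ

/-- The probability-path Bellman operator
`(B_t^π m)(·|s,a) := (1−γ) P_t(·|s,a) + γ (P^π m)(·|s,a)`. -/
def Bpath {d : ℕ} {𝒜 : Type*} [MeasurableSpace 𝒜] (γ : ℝ)
    (P : St d × 𝒜 → Measure (St d)) (π : St d → 𝒜) (κ : St d → Measure (St d))
    (m : St d × 𝒜 → Measure (St d)) : St d × 𝒜 → Measure (St d) :=
  fun sa => ENNReal.ofReal (1 - γ) • Pt P κ sa + ENNReal.ofReal γ • Ppi P π m sa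

/-- `Γ` is a coupling of `μ` and `ν`: a measure on the product whose marginals are `μ`, `ν`. -/
def IsCoupling {d : ℕ} (Γ : Measure (St d × St d)) (μ ν : Measure (St d)) : Prop :=
  Γ.map Prod.fst = μ ∧ Γ.map Prod.snd = ν

/-- The `1`-Wasserstein distance for the Euclidean distance on `ℝ^d`. -/
def W1 {d : ℕ} (μ ν : Measure (St d)) : ℝ≥0∞ :=
  ⨅ (Γ : Measure (St d × St d)) (_ : IsProbabilityMeasure Γ) (_ : IsCoupling Γ μ ν),
    ∫⁻ p, edist p.1 p.2 ∂Γ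

theorem MeasureTheory.Measure.map_bind {α β δ : Type*} [MeasurableSpace α] [MeasurableSpace β]
    [MeasurableSpace δ] (μ : Measure α) {κ : α → Measure β} (hκ : Measurable κ) {f : β → δ}
    (hf : Measurable f) : (μ.bind κ).map f = μ.bind fun a => (κ a).map f := by
  have hκf : Measurable fun a => (κ a).map f := (Measure.measurable_map f hf).comp hκ
  ext s hs
  rw [Measure.map_apply hf hs, Measure.bind_apply (hf hs) hκ.aemeasurable,
    Measure.bind_apply hs hκf.aemeasurable]
  exact lintegral_congr fun a => (Measure.map_apply hf hs).symm

section Coupling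

variable {d : ℕ}

theorem W1_le_lintegral_edist {Γ : Measure (St d × St d)} [IsProbabilityMeasure Γ]
    {μ ν : Measure (St d)} (h : IsCoupling Γ μ ν) : W1 μ ν ≤ ∫⁻ p, edist p.1 p.2 ∂Γ :=
  iInf₂_le_of_le Γ ‹_› (iInf_le _ h)

theorem isCoupling_map_diag (μ : Measure (St d)) :
    IsCoupling (μ.map fun x => (x, x)) μ μ := by
  have hdiag : Measurable fun x : St d => (x, x) := by fun_prop
  exact ⟨by rw [Measure.map_map measurable_fst hdiag]; exact Measure.map_id,
    by rw [Measure.map_map measurable_snd hdiag]; exact Measure.map_id⟩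

theorem lintegral_edist_map_diag (μ : Measure (St d)) :
    ∫⁻ p, edist p.1 p.2 ∂μ.map (fun x => (x, x)) = 0 := by
  rw [lintegral_map (by fun_prop) (by fun_prop)]
  simp

namespace IsCoupling

variable {Γ Γ' : Measure (St d × St d)} {μ μ' ν ν' : Measure (St d)}

theorem add (h : IsCoupling Γ μ ν) (h' : IsCoupling Γ' μ' ν') :
    IsCoupling (Γ + Γ') (μ + μ') (ν + ν') :=
  ⟨by rw [Measure.map_add _ _ measurable_fst, h.1, h'.1],
    by rw [Measure.map_add _ _ measurable_snd, h.2, h'.2]⟩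

theorem smul (c : ℝ≥0∞) (h : IsCoupling Γ μ ν) : IsCoupling (c • Γ) (c • μ) (c • ν) :=
  ⟨by rw [Measure.map_smul, h.1], by rw [Measure.map_smul, h.2]⟩

theorem bind {α : Type*} [MeasurableSpace α] (ρ : Measure α) {Γ : α → Measure (St d × St d)}
    (hΓ : Measurable Γ) {μ ν : α → Measure (St d)} (h : ∀ a, IsCoupling (Γ a) (μ a) (ν a)) :
    IsCoupling (ρ.bind Γ) (ρ.bind μ) (ρ.bind ν) :=
  ⟨by rw [Measure.map_bind ρ hΓ measurable_fst]; exact congrArg _ (funext fun a => (h a).1),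
    by rw [Measure.map_bind ρ hΓ measurable_snd]; exact congrArg _ (funext fun a => (h a).2)⟩

end IsCoupling

def HasNearOptimalCouplings {α : Type*} [MeasurableSpace α] (μ ν : α → Measure (St d)) :
    Prop :=
  ∀ ε : ℝ≥0∞, 0 < ε → ∃ Γ : α → Measure (St d × St d),
    Measurable Γ ∧ (∀ a, IsProbabilityMeasure (Γ a)) ∧
    (∀ a, IsCoupling (Γ a) (μ a) (ν a)) ∧
    ∀ a, (∫⁻ p, edist p.1 p.2 ∂Γ a) ≤ W1 (μ a) (ν a) + ε

end Coupling

section Bellman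

variable {d : ℕ} {𝒜 : Type*} [MeasurableSpace 𝒜] {γ : ℝ} {P : St d × 𝒜 → Measure (St d)}
  {π : St d → 𝒜} {κ : St d → Measure (St d)}

theorem W1_Bpath_le_mul_iSup (hγ0 : 0 ≤ γ) (hγ1 : γ ≤ 1)
    (hPprob : ∀ sa, IsProbabilityMeasure (P sa)) (hπ : Measurable π) (hκmeas : Measurable κ)
    (hκprob : ∀ x, IsProbabilityMeasure (κ x)) {m m' : St d × 𝒜 → Measure (St d)}
    {Γ : St d × 𝒜 → Measure (St d × St d)} (hΓmeas : Measurable Γ)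
    (hΓprob : ∀ sa, IsProbabilityMeasure (Γ sa)) (hΓ : ∀ sa, IsCoupling (Γ sa) (m sa) (m' sa))
    (sa : St d × 𝒜) :
    W1 (Bpath γ P π κ m sa) (Bpath γ P π κ m' sa) ≤
      ENNReal.ofReal γ * ⨆ sa, ∫⁻ p, edist p.1 p.2 ∂Γ sa := by
  have hΓπ : Measurable fun s' => Γ (s', π s') := hΓmeas.comp (by fun_prop)
  set diag : Measure (St d × St d) := (Pt P κ sa).map fun x => (x, x)
  set next : Measure (St d × St d) := (P sa).bind fun s' => Γ (s', π s')
  have : IsProbabilityMeasure (Pt P κ sa) :=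
    isProbabilityMeasure_bind hκmeas.aemeasurable (.of_forall hκprob)
  have : IsProbabilityMeasure diag := Measure.isProbabilityMeasure_map (by fun_prop)
  have : IsProbabilityMeasure next :=
    isProbabilityMeasure_bind hΓπ.aemeasurable (.of_forall fun _ => hΓprob _)
  have : IsProbabilityMeasure (ENNReal.ofReal (1 - γ) • diag + ENNReal.ofReal γ • next) := by
    constructor
    simp only [Measure.add_apply, Measure.smul_apply, measure_univ, smul_eq_mul, mul_one]
    rw [← ENNReal.ofReal_add (by linarith) hγ0, sub_add_cancel, ENNReal.ofReal_one]
  have hcpl : IsCoupling (ENNReal.ofReal (1 - γ) • diag + ENNReal.ofReal γ • next)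
      (Bpath γ P π κ m sa) (Bpath γ P π κ m' sa) :=
    ((isCoupling_map_diag _).smul _).add ((IsCoupling.bind _ hΓπ fun _ => hΓ _).smul _)
  have hnext : ∫⁻ p, edist p.1 p.2 ∂next ≤ ⨆ sa, ∫⁻ p, edist p.1 p.2 ∂Γ sa := by
    rw [Measure.lintegral_bind hΓπ.aemeasurable (by fun_prop)]
    calc ∫⁻ s', ∫⁻ p, edist p.1 p.2 ∂Γ (s', π s') ∂P sa
        ≤ ∫⁻ _, ⨆ sa, ∫⁻ p, edist p.1 p.2 ∂Γ sa ∂P sa :=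
          lintegral_mono fun s' => le_iSup (fun sa => ∫⁻ p, edist p.1 p.2 ∂Γ sa) (s', π s')
      _ = ⨆ sa, ∫⁻ p, edist p.1 p.2 ∂Γ sa := by simp
  calc W1 (Bpath γ P π κ m sa) (Bpath γ P π κ m' sa)
      ≤ ∫⁻ p, edist p.1 p.2 ∂(ENNReal.ofReal (1 - γ) • diag + ENNReal.ofReal γ • next) :=
        W1_le_lintegral_edist hcpl
    _ = ENNReal.ofReal γ * ∫⁻ p, edist p.1 p.2 ∂next := by
        rw [lintegral_add_measure, lintegral_smul_measure, lintegral_smul_measure,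
          lintegral_edist_map_diag]
        simp
    _ ≤ ENNReal.ofReal γ * ⨆ sa, ∫⁻ p, edist p.1 p.2 ∂Γ sa := by gcongr

theorem iSup_W1_Bpath_le (hγ0 : 0 ≤ γ) (hγ1 : γ ≤ 1)
    (hPprob : ∀ sa, IsProbabilityMeasure (P sa)) (hπ : Measurable π) (hκmeas : Measurable κ)
    (hκprob : ∀ x, IsProbabilityMeasure (κ x)) {m m' : St d × 𝒜 → Measure (St d)}
    (hcpl : HasNearOptimalCouplings m m') :
    ⨆ sa, W1 (Bpath γ P π κ m sa) (Bpath γ P π κ m' sa) ≤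
      ENNReal.ofReal γ * ⨆ sa, W1 (m sa) (m' sa) := by
  refine iSup_le fun sa => ENNReal.le_of_forall_pos_le_add fun ε hε _ => ?_
  obtain ⟨Γ, hΓmeas, hΓprob, hΓ, hΓcost⟩ := hcpl ε (by exact_mod_cast hε)
  calc W1 (Bpath γ P π κ m sa) (Bpath γ P π κ m' sa)
      ≤ ENNReal.ofReal γ * ⨆ sa, ∫⁻ p, edist p.1 p.2 ∂Γ sa :=
        W1_Bpath_le_mul_iSup hγ0 hγ1 hPprob hπ hκmeas hκprob hΓmeas hΓprob hΓ sa
    _ ≤ ENNReal.ofReal γ * ((⨆ sa, W1 (m sa) (m' sa)) + ε) := by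
        gcongr
        exact iSup_le fun sa =>
          (hΓcost sa).trans (add_le_add_left (le_iSup (fun sa => W1 (m sa) (m' sa)) sa) _)
    _ ≤ ENNReal.ofReal γ * (⨆ sa, W1 (m sa) (m' sa)) + ε := by
        rw [mul_add]
        exact add_le_add_right (mul_le_of_le_one_left' (ENNReal.ofReal_le_one.mpr hγ1)) _

end Bellman

theorem bellman_path_iterates_converge_general {d : ℕ} {𝒜 : Type*} [MeasurableSpace 𝒜]
    (γ : ℝ) (hγ0 : 0 ≤ γ) (hγ1 : γ < 1)
    (P : St d × 𝒜 → Measure (St d))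
    (hPprob : ∀ sa, IsProbabilityMeasure (P sa))
    (π : St d → 𝒜) (hπ : Measurable π)
    (κ : St d → Measure (St d)) (hκmeas : Measurable κ)
    (hκprob : ∀ x, IsProbabilityMeasure (κ x))
    -- the fixed point
    (mbar : St d × 𝒜 → Measure (St d))
    (hfix : ∀ sa, Bpath γ P π κ mbar sa = mbar sa)
    -- the iterates
    (m : ℕ → St d × 𝒜 → Measure (St d))
    (hiter : ∀ n sa, m (n + 1) sa = Bpath γ P π κ (m n) sa)
    -- jointly measurable families of ε-optimal couplings at every iteration
    (hcpl : ∀ n : ℕ, ∀ ε : ℝ≥0∞, 0 < ε → ∃ Γ : St d × 𝒜 → Measure (St d × St d),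
      Measurable Γ ∧ (∀ sa, IsProbabilityMeasure (Γ sa)) ∧
      (∀ sa, IsCoupling (Γ sa) (m n sa) (mbar sa)) ∧
      ∀ sa, (∫⁻ pr, edist pr.1 pr.2 ∂Γ sa) ≤ W1 (m n sa) (mbar sa) + ε) :
    ∀ n : ℕ, (⨆ sa : St d × 𝒜, W1 (m n sa) (mbar sa)) ≤
      ENNReal.ofReal γ ^ n * ⨆ sa : St d × 𝒜, W1 (m 0 sa) (mbar sa) := by
  intro n
  induction n with
  | zero => simp
  | succ n ih =>
    have hstep : ⨆ sa, W1 (m (n + 1) sa) (mbar sa) =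
        ⨆ sa, W1 (Bpath γ P π κ (m n) sa) (Bpath γ P π κ mbar sa) :=
      iSup_congr fun sa => by rw [hiter, hfix]
    calc ⨆ sa, W1 (m (n + 1) sa) (mbar sa)
        ≤ ENNReal.ofReal γ * ⨆ sa, W1 (m n sa) (mbar sa) :=
          hstep ▸ iSup_W1_Bpath_le hγ0 hγ1.le hPprob hπ hκmeas hκprob (hcpl n)
      _ ≤ ENNReal.ofReal γ * (ENNReal.ofReal γ ^ n * ⨆ sa, W1 (m 0 sa) (mbar sa)) := by gcongr
      _ = ENNReal.ofReal γ ^ (n + 1) * ⨆ sa, W1 (m 0 sa) (mbar sa) := by rw [pow_succ', mul_assoc]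

/-- The iterates of the probability-path Bellman operator converge to its
fixed point geometrically fast in the supremum `1`-Wasserstein distance. -/
theorem bellman_path_iterates_converge {d : ℕ} {𝒜 : Type*} [MeasurableSpace 𝒜]
    (t : ℝ) (ht : t ∈ Set.Icc (0 : ℝ) 1)
    (γ : ℝ) (hγ0 : 0 ≤ γ) (hγ1 : γ < 1)
    (P : St d × 𝒜 → Measure (St d)) (hPmeas : Measurable P)
    (hPprob : ∀ sa, IsProbabilityMeasure (P sa))
    (π : St d → 𝒜) (hπ : Measurable π)
    (κ : St d → Measure (St d)) (hκmeas : Measurable κ)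
    (hκprob : ∀ x, IsProbabilityMeasure (κ x))
    -- the fixed point
    (mbar : St d × 𝒜 → Measure (St d)) (hmbarmeas : Measurable mbar)
    (hmbarprob : ∀ sa, IsProbabilityMeasure (mbar sa))
    (hmbarmom : ∀ sa, (∫⁻ x, (‖x‖₊ : ℝ≥0∞) ∂mbar sa) < ⊤)
    (hfix : ∀ sa, Bpath γ P π κ mbar sa = mbar sa)
    -- the iterates
    (m : ℕ → St d × 𝒜 → Measure (St d)) (hmmeas : ∀ n, Measurable (m n))
    (hmprob : ∀ n sa, IsProbabilityMeasure (m n sa))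
    (hmmom : ∀ n sa, (∫⁻ x, (‖x‖₊ : ℝ≥0∞) ∂m n sa) < ⊤)
    (hiter : ∀ n sa, m (n + 1) sa = Bpath γ P π κ (m n) sa)
    -- finite initial distance
    (hC : (⨆ sa : St d × 𝒜, W1 (m 0 sa) (mbar sa)) < ⊤)
    -- jointly measurable families of ε-optimal couplings at every iteration
    (hcpl : ∀ n : ℕ, ∀ ε : ℝ≥0∞, 0 < ε → ∃ Γ : St d × 𝒜 → Measure (St d × St d),
      Measurable Γ ∧ (∀ sa, IsProbabilityMeasure (Γ sa)) ∧
      (∀ sa, IsCoupling (Γ sa) (m n sa) (mbar sa)) ∧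
      ∀ sa, (∫⁻ pr, edist pr.1 pr.2 ∂Γ sa) ≤ W1 (m n sa) (mbar sa) + ε) :
    ∀ n : ℕ, (⨆ sa : St d × 𝒜, W1 (m n sa) (mbar sa)) ≤
      ENNReal.ofReal γ ^ n * ⨆ sa : St d × 𝒜, W1 (m 0 sa) (mbar sa) :=
  bellman_path_iterates_converge_general γ hγ0 hγ1 P hPprob π hπ κ hκmeas hκprob mbar hfix m hiter
    hcpl
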